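/- arXiv:1105.1576 — 4 statements merged into one kernel-verified Lean document; each statement's English description precedes it below -/
import Mathlib

section
/- The assignment which is the identity on objects and sends a morphism of pointed finite sets α : A → B in Γ to the pointed function α̃ : A₋ ⊔ {b₀} → B₋ ⊔ {a₀} obtained as the composite A₋ ⊔ {b₀} ≅ A → (α) → B ≅ B₋ ⊔ {a₀} (where each ≅ is the canonical bijection exchanging the indicated basepoints and equal to the identity elsewhere) defines a functor Γ → Γ̃, and this functor is an equivalence of categories. In particular Γ̃, with its twisted composition law, is a well-defined category. -/
/-!
STATEMENT 0: The assignment which is the identity on objects and sends a morphism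
α : A → B of pointed finite sets to the twisted morphism
α̃ : A₋ ⊔ {b₀} → B₋ ⊔ {a₀} (composite of the canonical basepoint-exchanging bijections
with α) defines a functor Γ → Γ̃, and this functor is an equivalence of categories.
In particular Γ̃, with its twisted composition law, is a well-defined category
(witnessed below by the `Category` instance on `GammaTilde`).

Here `A₋ ⊔ {b₀}` is encoded as `Option A₋` with `none` standing for the adjoined
basepoint; under this encoding the twisted composition of Γ̃ is composition of
`none`-preserving functions.
-/

open CategoryTheory

attribute [local instance] Classical.propDecidable

/-- A pointed finite set. -/
structure PFin where
  carrier : Type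
  [fin : Fintype carrier]
  pt : carrier

attribute [instance] PFin.fin

/-- Γ: the category of pointed finite sets and pointed maps. -/
instance : Category PFin where
  Hom A B := {f : A.carrier → B.carrier // f A.pt = B.pt}
  id A := ⟨_root_.id, rfl⟩
  comp f g := ⟨g.1 ∘ f.1, by simp [f.2, g.2]⟩
  id_comp f := Subtype.ext rfl
  comp_id f := Subtype.ext rfl
  assoc f g h := Subtype.ext rfl

/-- `A₋`: the underlying set of `A` with the basepoint removed. -/
def PFin.minus (A : PFin) : Type := {a : A.carrier // a ≠ A.pt}

noncomputable instance (A : PFin) : Fintype A.minus := by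
  classical exact Subtype.fintype _

/-- Γ̃: same objects as Γ. A morphism from `A` to `B` is a pointed function
`A₋ ⊔ {b₀} → B₋ ⊔ {a₀}`; in the `Option` encoding (`none` = adjoined basepoint) the
twisted composition law becomes composition of `none`-preserving functions, since the
canonical bijections exchanging basepoints are identities in this encoding. -/
def GammaTilde : Type 1 := PFin

/-- The twisted category structure on Γ̃. -/
instance : Category GammaTilde where
  Hom A B := {f : Option (PFin.minus A) → Option (PFin.minus B) // f none = none}
  id A := ⟨_root_.id, rfl⟩
  comp f g := ⟨g.1 ∘ f.1, by simp [f.2, g.2]⟩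
  id_comp f := Subtype.ext rfl
  comp_id f := Subtype.ext rfl
  assoc f g h := Subtype.ext rfl

/-- The canonical bijection `A₋ ⊔ {b₀} ≅ A`: the identity on `A₋`, sending the adjoined
basepoint (`none`) to the basepoint of `A`. -/
def fromOpt (A : PFin) : Option (PFin.minus A) → A.carrier :=
  fun x => x.elim A.pt Subtype.val

/-- The canonical bijection `B ≅ B₋ ⊔ {a₀}`: the identity away from the basepoint,
sending the basepoint of `B` to the adjoined basepoint (`none`). -/
noncomputable def toOpt (B : PFin) : B.carrier → Option (PFin.minus B) :=
  fun b => if h : b = B.pt then none else some ⟨b, h⟩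

/-- The twisted morphism `α̃` associated to a pointed map `α : A → B`: the composite
`A₋ ⊔ {b₀} ≅ A → B ≅ B₋ ⊔ {a₀}` of `α` with the canonical basepoint-exchanging
bijections. -/
noncomputable def twistHom {A B : PFin} (α : A ⟶ B) :
    (show GammaTilde from A) ⟶ (show GammaTilde from B) :=
  ⟨fun x => toOpt B (α.1 (fromOpt A x)), by
    classical simp [toOpt, fromOpt, Option.elim, α.2]⟩

/-!
`toOpt A` and `fromOpt A` are mutually inverse pointed bijections, and `twistHom α` is the
conjugate of `α` by them. Conjugation respects identities and composition and is inverted by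
conjugating back, so the twisting functor is fully faithful; it is the identity on objects.
-/

lemma toOpt_pt (A : PFin) : toOpt A A.pt = none := dif_pos rfl

lemma fromOpt_toOpt (A : PFin) (a : A.carrier) : fromOpt A (toOpt A a) = a := by
  by_cases h : a = A.pt
  · rw [h, toOpt_pt]; rfl
  · rw [toOpt, dif_neg h]; rfl

lemma toOpt_fromOpt (A : PFin) (x : Option A.minus) : toOpt A (fromOpt A x) = x := by
  cases x with
  | none => exact toOpt_pt A
  | some a => exact dif_neg a.2

lemma twistHom_id (A : PFin) : twistHom (𝟙 A) = 𝟙 (show GammaTilde from A) :=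
  Subtype.ext (funext (toOpt_fromOpt A))

lemma twistHom_comp {A B C : PFin} (α : A ⟶ B) (β : B ⟶ C) :
    twistHom (α ≫ β) = twistHom α ≫ twistHom β :=
  Subtype.ext <| funext fun _ =>
    congrArg (fun b => toOpt C (β.1 b)) (fromOpt_toOpt B _).symm

noncomputable def untwistHom {A B : PFin}
    (g : (show GammaTilde from A) ⟶ (show GammaTilde from B)) : A ⟶ B :=
  ⟨fun a => fromOpt B (g.1 (toOpt A a)), by
    change fromOpt B (g.1 (toOpt A A.pt)) = B.pt
    rw [toOpt_pt, g.2]; rfl⟩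

lemma twistHom_untwistHom {A B : PFin}
    (g : (show GammaTilde from A) ⟶ (show GammaTilde from B)) : twistHom (untwistHom g) = g :=
  Subtype.ext <| funext fun x => by
    change toOpt B (fromOpt B (g.1 (toOpt A (fromOpt A x)))) = g.1 x
    rw [toOpt_fromOpt, toOpt_fromOpt]

lemma untwistHom_twistHom {A B : PFin} (α : A ⟶ B) : untwistHom (twistHom α) = α :=
  Subtype.ext <| funext fun a => by
    change fromOpt B (toOpt B (α.1 (fromOpt A (toOpt A a)))) = α.1 a
    rw [fromOpt_toOpt, fromOpt_toOpt]

noncomputable def twistFunctor : PFin ⥤ GammaTilde where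
  obj A := A
  map := twistHom
  map_id := twistHom_id
  map_comp := twistHom_comp

noncomputable def twistFunctor.fullyFaithful : twistFunctor.FullyFaithful where
  preimage := untwistHom
  map_preimage := twistHom_untwistHom
  preimage_map := untwistHom_twistHom

instance : twistFunctor.IsEquivalence where
  faithful := twistFunctor.fullyFaithful.faithful
  full := twistFunctor.fullyFaithful.full
  essSurj := ⟨fun A => ⟨A, ⟨Iso.refl _⟩⟩⟩

theorem stmt_0 :
    ∃ F : PFin ⥤ GammaTilde,
      (∀ A : PFin, F.obj A = A) ∧
      (∀ (A B : PFin) (α : A ⟶ B), HEq (F.map α) (twistHom α)) ∧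
      F.IsEquivalence :=
  ⟨twistFunctor, fun _ => rfl, fun _ _ _ => HEq.rfl, inferInstance⟩
end

section
/- Let A, B, C be pointed finite sets with basepoints a₀, b₀, c₀, and let α̃ : A₋ ⊔ {b₀} → B₋ ⊔ {a₀} and β̃ : B₋ ⊔ {c₀} → C₋ ⊔ {b₀} be pointed functions (so α̃(b₀) = a₀ and β̃(c₀) = b₀). (i) In the graph T̃_B ∪_B F_α̃, with vertex set A₋ ⊔ {b₀} ⊔ B₋ ⊔ {a₀} and edges x → α̃(x) for x ∈ A₋ ⊔ {b₀} and b → b₀ for b ∈ B₋, contracting all edges whose source lies in B₋ ⊔ {b₀} yields a graph canonically isomorphic to T̃_A: the quotient of the vertex set by the equivalence relation generated by b ∼ b₀ (b ∈ B₋) and b₀ ∼ a₀ is in canonical bijection with A₋ ⊔ {a₀}, and the induced edges are exactly a → a₀ for a ∈ A₋ (moreover the marked vertex b₀ is sent to the root class a₀, so the isomorphism respects markings). (ii) In the graph F_β̃ ∪_B F_α̃, with vertex set A₋ ⊔ B₋ ⊔ C₋ ⊔ {a₀, b₀, c₀} and edges x → α̃(x) for x ∈ A₋ ⊔ {b₀}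 and y → β̃(y) for y ∈ B₋ ⊔ {c₀}, contracting all edges whose source lies in B₋ ⊔ {b₀} yields a graph canonically isomorphic to F_{β̃∗α̃}: the quotient of the vertex set by the equivalence relation generated by y ∼ β̃(y) (y ∈ B₋) and b₀ ∼ a₀ is in canonical bijection with (A₋ ⊔ {c₀}) ⊔ (C₋ ⊔ {a₀}), and under this bijection the induced edges are exactly x → (β̃∗α̃)(x) for x ∈ A₋ ⊔ {c₀}, where β̃∗α̃ denotes the twisted composite of α̃ and β̃. -/
/-!
STATEMENT 2: the pointed/twisted analogue of Statement 1.
Pointed finite sets A, B, C with basepoints a₀, b₀, c₀ are encoded by types `A` with a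
chosen point; `A₋ ⊔ {b₀}` is encoded as `Option A₋` with `none` playing the role of the
exchanged basepoint (so the canonical basepoint-exchanging bijections become identities,
and the twisted composite `β̃∗α̃` becomes literal composition `β̃ ∘ α̃`).

(i) Contracting, in `T̃_B ∪_B F_α̃`, all edges whose source lies in `B₋ ⊔ {b₀}` yields a
    marked graph canonically isomorphic to `T̃_A`.
(ii) Contracting, in `F_β̃ ∪_B F_α̃`, all edges whose source lies in `B₋ ⊔ {b₀}` yields a
    graph canonically isomorphic to `F_{β̃∗α̃}`.
-/

section

variable (A B C : Type) (a₀ : A) (b₀ : B) (c₀ : C)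

/-- `A₋`: the pointed set `A` with its basepoint removed. -/
abbrev minus (A : Type) (a₀ : A) := {a : A // a ≠ a₀}

/-- The twisted composite of `α̃ : A₋ ⊔ {b₀} → B₋ ⊔ {a₀}` and
`β̃ : B₋ ⊔ {c₀} → C₋ ⊔ {b₀}` (in the `Option` encoding, where the canonical
basepoint-exchanging bijections are identities, it is literal composition). -/
def twistComp {Am Bm Cm : Type} (βt : Option Bm → Option Cm) (αt : Option Am → Option Bm) :
    Option Am → Option Cm := βt ∘ αt

section PartOne

variable {A B : Type} {a₀ : A} {b₀ : B}

/-- Vertex set of `T̃_B ∪_B F_α̃`: `(A₋ ⊔ {b₀}) ⊔ (B₋ ⊔ {a₀})`;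
`Sum.inl none` is `b₀` and `Sum.inr none` is `a₀`. -/
abbrev W₁ (A B : Type) (a₀ : A) (b₀ : B) := Option (minus A a₀) ⊕ Option (minus B b₀)

/-- The relation contracting all edges whose source lies in `B₋ ⊔ {b₀}`:
the edges `b → b₀` (b ∈ B₋) of `T̃_B` and the edge `b₀ → α̃(b₀) = a₀` of `F_α̃`. -/
def contrW₁ (A B : Type) (a₀ : A) (b₀ : B) : W₁ A B a₀ b₀ → W₁ A B a₀ b₀ → Prop :=
  fun v w =>
    (∃ b : minus B b₀, v = Sum.inr (some b) ∧ w = Sum.inl none) ∨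
    (v = Sum.inl none ∧ w = Sum.inr none)

abbrev QW₁ (A B : Type) (a₀ : A) (b₀ : B) := Quot (contrW₁ A B a₀ b₀)

/-- The canonical map `A₋ ⊔ {a₀} → quotient` (with `none` playing the role of `a₀`). -/
def toQW₁ (A B : Type) (a₀ : A) (b₀ : B) : Option (minus A a₀) → QW₁ A B a₀ b₀ :=
  fun x => Quot.mk _ (x.elim (Sum.inr none) (fun a => Sum.inl (some a)))

end PartOne

section PartTwo

variable {A B C : Type} {a₀ : A} {b₀ : B} {c₀ : C}

/-- Vertex set of `F_β̃ ∪_B F_α̃`: `A₋ ⊔ B₋ ⊔ C₋ ⊔ {a₀, b₀, c₀}`, the three basepoints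
encoded as `Sum.inr 0 = a₀`, `Sum.inr 1 = b₀`, `Sum.inr 2 = c₀`. -/
abbrev W₂ (A B C : Type) (a₀ : A) (b₀ : B) (c₀ : C) :=
  (minus A a₀ ⊕ (minus B b₀ ⊕ minus C c₀)) ⊕ Fin 3

/-- Vertices of `A₋ ⊔ {b₀}`, the source of `F_α̃`, inside `W₂`. -/
def srcA (A B C : Type) (a₀ : A) (b₀ : B) (c₀ : C) :
    Option (minus A a₀) → W₂ A B C a₀ b₀ c₀ :=
  fun x => x.elim (Sum.inr 1) (fun a => Sum.inl (Sum.inl a))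

/-- Vertices of `B₋ ⊔ {a₀}`, the target of `F_α̃`, inside `W₂`. -/
def tgtA (A B C : Type) (a₀ : A) (b₀ : B) (c₀ : C) :
    Option (minus B b₀) → W₂ A B C a₀ b₀ c₀ :=
  fun y => y.elim (Sum.inr 0) (fun b => Sum.inl (Sum.inr (Sum.inl b)))

/-- Vertices of `B₋ ⊔ {c₀}`, the source of `F_β̃`, inside `W₂`. -/
def srcB (A B C : Type) (a₀ : A) (b₀ : B) (c₀ : C) :
    Option (minus B b₀) → W₂ A B C a₀ b₀ c₀ :=
  fun y => y.elim (Sum.inr 2) (fun b => Sum.inl (Sum.inr (Sum.inl b)))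

/-- Vertices of `C₋ ⊔ {b₀}`, the target of `F_β̃`, inside `W₂`. -/
def tgtB (A B C : Type) (a₀ : A) (b₀ : B) (c₀ : C) :
    Option (minus C c₀) → W₂ A B C a₀ b₀ c₀ :=
  fun z => z.elim (Sum.inr 1) (fun c => Sum.inl (Sum.inr (Sum.inr c)))

/-- The relation contracting all edges whose source lies in `B₋ ⊔ {b₀}`:
the edges `y → β̃(y)` for `y ∈ B₋`, and the edge `b₀ → α̃(b₀) = a₀`. -/
def contrW₂ (A B C : Type) (a₀ : A) (b₀ : B) (c₀ : C)
    (βt : Option (minus B b₀) → Option (minus C c₀)) :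
    W₂ A B C a₀ b₀ c₀ → W₂ A B C a₀ b₀ c₀ → Prop :=
  fun v w =>
    (∃ b : minus B b₀, v = srcB A B C a₀ b₀ c₀ (some b) ∧
      w = tgtB A B C a₀ b₀ c₀ (βt (some b))) ∨
    (v = Sum.inr 1 ∧ w = Sum.inr 0)

abbrev QW₂ (A B C : Type) (a₀ : A) (b₀ : B) (c₀ : C)
    (βt : Option (minus B b₀) → Option (minus C c₀)) :=
  Quot (contrW₂ A B C a₀ b₀ c₀ βt)

/-- The canonical map `(A₋ ⊔ {c₀}) ⊔ (C₋ ⊔ {a₀}) → quotient` (with the `none`s playing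
the roles of `c₀` and `a₀` respectively). -/
def toQW₂ (A B C : Type) (a₀ : A) (b₀ : B) (c₀ : C)
    (βt : Option (minus B b₀) → Option (minus C c₀)) :
    Option (minus A a₀) ⊕ Option (minus C c₀) → QW₂ A B C a₀ b₀ c₀ βt :=
  fun x => Quot.mk _ <|
    x.elim
      (fun xa => xa.elim (Sum.inr 2) (fun a => Sum.inl (Sum.inl a)))
      (fun xc => xc.elim (Sum.inr 0) (fun c => Sum.inl (Sum.inr (Sum.inr c))))

end PartTwo

/-!
Each contracted vertex set is identified with the claimed one through a retraction of the
vertex set that is constant along the contracted edges and splits the canonical map. The induced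
edges are then read off vertex by vertex: in (i) all of `B₋ ⊔ {b₀, a₀}` lies in the class of `a₀`;
in (ii) each `y ∈ B₋` lies in the class of `β̃(y)` and `b₀` in that of `a₀`, so the class of
`α̃(x)` is that of `β̃(α̃(x))`.
-/

theorem Quot.bijective_mk_comp {W X : Type*} {rel : W → W → Prop} (s : X → W) (r : W → X)
    (hr : ∀ v w, rel v w → r v = r w) (hrs : Function.LeftInverse r s)
    (hsr : ∀ w, Quot.mk rel w = Quot.mk rel (s (r w))) :
    Function.Bijective (fun x => Quot.mk rel (s x)) :=
  ⟨Function.LeftInverse.injective (g := Quot.lift r hr) hrs,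
    fun q => Quot.inductionOn q fun w => ⟨r w, (hsr w).symm⟩⟩

theorem Set.image_setOf_exists_pair {ι W Q : Type*} (q : W → Q) (f g : ι → W) :
    (fun e : W × W => (q e.1, q e.2)) '' {e | ∃ i, e = (f i, g i)} =
      {e | ∃ i, e = (q (f i), q (g i))} := by
  ext e
  simp only [Set.mem_image, Set.mem_ofPred_eq]
  constructor
  · rintro ⟨_, ⟨i, rfl⟩, rfl⟩
    exact ⟨i, rfl⟩
  · rintro ⟨i, rfl⟩
    exact ⟨_, ⟨i, rfl⟩, rfl⟩

section PartOne

variable {A B : Type} {a₀ : A} {b₀ : B}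

def retractW₁ : W₁ A B a₀ b₀ → Option (minus A a₀)
  | Sum.inl (some a) => some a
  | _ => none

theorem retractW₁_eq_of_contr (v w : W₁ A B a₀ b₀) (h : contrW₁ A B a₀ b₀ v w) :
    retractW₁ v = retractW₁ w := by
  rcases h with ⟨b, rfl, rfl⟩ | ⟨rfl, rfl⟩ <;> rfl

theorem mk_marked_eq_toQW₁_none :
    Quot.mk (contrW₁ A B a₀ b₀) (Sum.inl none) = toQW₁ A B a₀ b₀ none :=
  Quot.sound (Or.inr ⟨rfl, rfl⟩)

theorem mk_inr_eq_toQW₁_none (y : Option (minus B b₀)) :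
    Quot.mk (contrW₁ A B a₀ b₀) (Sum.inr y) = toQW₁ A B a₀ b₀ none := by
  cases y with
  | none => rfl
  | some b => exact (Quot.sound (Or.inl ⟨b, rfl, rfl⟩) :
      Quot.mk (contrW₁ A B a₀ b₀) _ = _).trans mk_marked_eq_toQW₁_none

theorem mk_eq_toQW₁_retractW₁ (v : W₁ A B a₀ b₀) :
    Quot.mk (contrW₁ A B a₀ b₀) v = toQW₁ A B a₀ b₀ (retractW₁ v) := by
  match v with
  | Sum.inl (some _) => rfl
  | Sum.inl none => exact mk_marked_eq_toQW₁_none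
  | Sum.inr y => exact mk_inr_eq_toQW₁_none y

theorem toQW₁_bijective : Function.Bijective (toQW₁ A B a₀ b₀) :=
  Quot.bijective_mk_comp _ retractW₁ retractW₁_eq_of_contr (fun x => by cases x <;> rfl)
    mk_eq_toQW₁_retractW₁

end PartOne

section PartTwo

variable {A B C : Type} {a₀ : A} {b₀ : B} {c₀ : C}
  (βt : Option (minus B b₀) → Option (minus C c₀))

def retractW₂ : W₂ A B C a₀ b₀ c₀ → Option (minus A a₀) ⊕ Option (minus C c₀)
  | Sum.inl (Sum.inl a) => Sum.inl (some a)
  | Sum.inl (Sum.inr (Sum.inl b)) => Sum.inr (βt (some b))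
  | Sum.inl (Sum.inr (Sum.inr c)) => Sum.inr (some c)
  | Sum.inr ⟨0, _⟩ => Sum.inr none
  | Sum.inr ⟨1, _⟩ => Sum.inr none
  | Sum.inr ⟨2, _⟩ => Sum.inl none

theorem retractW₂_tgtB (z : Option (minus C c₀)) :
    retractW₂ (a₀ := a₀) βt (tgtB A B C a₀ b₀ c₀ z) = Sum.inr z := by
  cases z <;> rfl

theorem retractW₂_eq_of_contr (v w : W₂ A B C a₀ b₀ c₀) (h : contrW₂ A B C a₀ b₀ c₀ βt v w) :
    retractW₂ βt v = retractW₂ βt w := by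
  rcases h with ⟨b, rfl, rfl⟩ | ⟨rfl, rfl⟩
  · exact (retractW₂_tgtB βt _).symm
  · rfl

theorem mk_b₀_eq_mk_a₀ :
    Quot.mk (contrW₂ A B C a₀ b₀ c₀ βt) (Sum.inr 1) = Quot.mk _ (Sum.inr 0) :=
  Quot.sound (Or.inr ⟨rfl, rfl⟩)

theorem mk_tgtB (z : Option (minus C c₀)) :
    Quot.mk (contrW₂ A B C a₀ b₀ c₀ βt) (tgtB A B C a₀ b₀ c₀ z) =
      toQW₂ A B C a₀ b₀ c₀ βt (Sum.inr z) := by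
  cases z with
  | none => exact mk_b₀_eq_mk_a₀ βt
  | some _ => rfl

theorem mk_srcB_some (b : minus B b₀) :
    Quot.mk (contrW₂ A B C a₀ b₀ c₀ βt) (srcB A B C a₀ b₀ c₀ (some b)) =
      toQW₂ A B C a₀ b₀ c₀ βt (Sum.inr (βt (some b))) :=
  (Quot.sound (Or.inl ⟨b, rfl, rfl⟩) : Quot.mk (contrW₂ A B C a₀ b₀ c₀ βt) _ = _).trans
    (mk_tgtB βt _)

theorem mk_eq_toQW₂_retractW₂ (v : W₂ A B C a₀ b₀ c₀) :
    Quot.mk (contrW₂ A B C a₀ b₀ c₀ βt) v = toQW₂ A B C a₀ b₀ c₀ βt (retractW₂ βt v) := by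
  match v with
  | Sum.inl (Sum.inl _) => rfl
  | Sum.inl (Sum.inr (Sum.inl b)) => exact mk_srcB_some βt b
  | Sum.inl (Sum.inr (Sum.inr _)) => rfl
  | Sum.inr ⟨0, _⟩ => rfl
  | Sum.inr ⟨1, _⟩ => exact mk_b₀_eq_mk_a₀ βt
  | Sum.inr ⟨2, _⟩ => rfl

theorem toQW₂_bijective : Function.Bijective (toQW₂ A B C a₀ b₀ c₀ βt) :=
  Quot.bijective_mk_comp _ (retractW₂ βt) (retractW₂_eq_of_contr βt)
    (by rintro ((_ | _) | (_ | _)) <;> rfl) (mk_eq_toQW₂_retractW₂ βt)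

theorem mk_tgtA {βt : Option (minus B b₀) → Option (minus C c₀)} (hβ : βt none = none)
    (y : Option (minus B b₀)) :
    Quot.mk (contrW₂ A B C a₀ b₀ c₀ βt) (tgtA A B C a₀ b₀ c₀ y) =
      toQW₂ A B C a₀ b₀ c₀ βt (Sum.inr (βt y)) := by
  cases y with
  | none => rw [hβ]; rfl
  | some b => exact mk_srcB_some βt b

end PartTwo

theorem stmt_2_general (A B C : Type)
    (a₀ : A) (b₀ : B) (c₀ : C)
    (αt : Option (minus A a₀) → Option (minus B b₀)) (hα : αt none = none)
    (βt : Option (minus B b₀) → Option (minus C c₀)) (hβ : βt none = none) :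
    -- (i): contracting T̃_B ∪_B F_α̃ along B₋ ⊔ {b₀} gives T̃_A:
    (Function.Bijective (toQW₁ A B a₀ b₀) ∧
      -- the induced edges are exactly a → a₀ for a ∈ A₋:
      (fun e : W₁ A B a₀ b₀ × W₁ A B a₀ b₀ =>
          (Quot.mk (contrW₁ A B a₀ b₀) e.1, Quot.mk (contrW₁ A B a₀ b₀) e.2)) ''
        {e | ∃ a : minus A a₀, e = (Sum.inl (some a), Sum.inr (αt (some a)))} =
        {e | ∃ a : minus A a₀, e = (toQW₁ A B a₀ b₀ (some a), toQW₁ A B a₀ b₀ none)} ∧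
      -- the marked vertex b₀ is sent to the root class a₀:
      Quot.mk (contrW₁ A B a₀ b₀) (Sum.inl none) = toQW₁ A B a₀ b₀ none) ∧
    -- (ii): contracting F_β̃ ∪_B F_α̃ along B₋ ⊔ {b₀} gives F_{β̃∗α̃}:
    (Function.Bijective (toQW₂ A B C a₀ b₀ c₀ βt) ∧
      (fun e : W₂ A B C a₀ b₀ c₀ × W₂ A B C a₀ b₀ c₀ =>
          (Quot.mk (contrW₂ A B C a₀ b₀ c₀ βt) e.1, Quot.mk (contrW₂ A B C a₀ b₀ c₀ βt) e.2)) ''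
        ({e | ∃ a : minus A a₀,
            e = (srcA A B C a₀ b₀ c₀ (some a), tgtA A B C a₀ b₀ c₀ (αt (some a)))} ∪
          {(srcB A B C a₀ b₀ c₀ none, tgtB A B C a₀ b₀ c₀ (βt none))}) =
        {e | ∃ x : Option (minus A a₀),
          e = (toQW₂ A B C a₀ b₀ c₀ βt (Sum.inl x),
               toQW₂ A B C a₀ b₀ c₀ βt (Sum.inr (twistComp βt αt x)))}) := by
  refine ⟨⟨toQW₁_bijective, ?_, mk_marked_eq_toQW₁_none⟩, toQW₂_bijective βt, ?_⟩
  · simp only [Set.image_setOf_exists_pair, mk_inr_eq_toQW₁_none]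
    rfl
  · rw [Set.image_union, Set.image_singleton, Set.image_setOf_exists_pair]
    simp only [mk_tgtA hβ, mk_tgtB]
    ext e
    simp only [Set.mem_union, Set.mem_ofPred_eq, Set.mem_singleton_iff, Option.exists,
      twistComp, Function.comp_apply, hα]
    exact or_comm

theorem stmt_2 (A B C : Type) [Fintype A] [Fintype B] [Fintype C]
    (a₀ : A) (b₀ : B) (c₀ : C)
    (αt : Option (minus A a₀) → Option (minus B b₀)) (hα : αt none = none)
    (βt : Option (minus B b₀) → Option (minus C c₀)) (hβ : βt none = none) :
    -- (i): contracting T̃_B ∪_B F_α̃ along B₋ ⊔ {b₀} gives T̃_A: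
    (Function.Bijective (toQW₁ A B a₀ b₀) ∧
      -- the induced edges are exactly a → a₀ for a ∈ A₋:
      (fun e : W₁ A B a₀ b₀ × W₁ A B a₀ b₀ =>
          (Quot.mk (contrW₁ A B a₀ b₀) e.1, Quot.mk (contrW₁ A B a₀ b₀) e.2)) ''
        {e | ∃ a : minus A a₀, e = (Sum.inl (some a), Sum.inr (αt (some a)))} =
        {e | ∃ a : minus A a₀, e = (toQW₁ A B a₀ b₀ (some a), toQW₁ A B a₀ b₀ none)} ∧
      -- the marked vertex b₀ is sent to the root class a₀:
      Quot.mk (contrW₁ A B a₀ b₀) (Sum.inl none) = toQW₁ A B a₀ b₀ none) ∧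
    -- (ii): contracting F_β̃ ∪_B F_α̃ along B₋ ⊔ {b₀} gives F_{β̃∗α̃}:
    (Function.Bijective (toQW₂ A B C a₀ b₀ c₀ βt) ∧
      (fun e : W₂ A B C a₀ b₀ c₀ × W₂ A B C a₀ b₀ c₀ =>
          (Quot.mk (contrW₂ A B C a₀ b₀ c₀ βt) e.1, Quot.mk (contrW₂ A B C a₀ b₀ c₀ βt) e.2)) ''
        ({e | ∃ a : minus A a₀,
            e = (srcA A B C a₀ b₀ c₀ (some a), tgtA A B C a₀ b₀ c₀ (αt (some a)))} ∪
          {(srcB A B C a₀ b₀ c₀ none, tgtB A B C a₀ b₀ c₀ (βt none))}) =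
        {e | ∃ x : Option (minus A a₀),
          e = (toQW₂ A B C a₀ b₀ c₀ βt (Sum.inl x),
               toQW₂ A B C a₀ b₀ c₀ βt (Sum.inr (twistComp βt αt x)))}) :=
  stmt_2_general A B C a₀ b₀ c₀ αt hα βt hβ

end
end

section
/- Let m ≥ 1, let M ⊆ ℝ^m be an open subset, and let A be a finite set. Let P be the poset, ordered by inclusion, of open subsets of M that are disjoint unions of finitely many standard balls. Then the canonical map colim_{U ∈ P} sEmb(A × D^m, U) → sEmb(A × D^m, M) — the colimit, in the category of sets, of the functor U ↦ sEmb(A × D^m, U) with transition maps given by postcomposition with inclusions, mapped to sEmb(A × D^m, M) by postcomposition with the inclusions U ⊆ M — is a bijection. -/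
/-!
The image of `u ∈ sEmb(A × D^m, M)` is the disjoint union of the balls `B(v_a, c_a)`, so it
belongs to `P`, and it is the least `U ∈ P` with `u ∈ sEmb(A × D^m, U)`. Hence every element of
the colimit is represented by the underlying embedding over its image, and sending `u` to that
class inverts the canonical map.
-/

open CategoryTheory CategoryTheory.Limits

noncomputable section

abbrev Euc (m : ℕ) := EuclideanSpace ℝ (Fin m)

def aff {m : ℕ} (p : ℝ × Euc m) (x : Euc m) : Euc m := p.1 • x + p.2

def unitBall (m : ℕ) : Set (Euc m) := Metric.ball 0 1

def realizeBalls {m : ℕ} {A : Type} (u : A → ℝ × Euc m) :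
    (A × (unitBall m)) → Euc m :=
  fun ax => aff (u ax.1) ax.2.1

def IsStdEmbBalls {m : ℕ} {A : Type} (X : Set (Euc m)) (u : A → ℝ × Euc m) : Prop :=
  (∀ a, 0 < (u a).1) ∧ Function.Injective (realizeBalls u) ∧
    Set.range (realizeBalls u) ⊆ X

/-- `U` is a disjoint union of finitely many standard balls, contained in `M`. -/
def IsFinBallUnion {m : ℕ} (M : Set (Euc m)) (U : Set (Euc m)) : Prop :=
  ∃ (ι : Type) (_ : Fintype ι) (p : ι → ℝ × Euc m), (∀ i, 0 < (p i).1) ∧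
    (∀ i i', i ≠ i' →
      Disjoint (Metric.ball (p i).2 (p i).1) (Metric.ball (p i').2 (p i').1)) ∧
    U = ⋃ i, Metric.ball (p i).2 (p i).1 ∧ U ⊆ M

/-- The poset of open subsets of `M` that are disjoint unions of finitely many standard
balls, ordered by inclusion. -/
def FinBallUnionPoset (m : ℕ) (M : Set (Euc m)) : Type :=
  {U : Set (Euc m) // IsFinBallUnion M U}

instance (m : ℕ) (M : Set (Euc m)) : PartialOrder (FinBallUnionPoset m M) :=
  inferInstanceAs (PartialOrder {U : Set (Euc m) // IsFinBallUnion M U})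

instance (m : ℕ) (M : Set (Euc m)) : Category (FinBallUnionPoset m M) :=
  Preorder.smallCategory _

/-- The functor `U ↦ sEmb(A × D^m, U)` on the poset `P`, with transition maps given by
postcomposition with inclusions. -/
def embDiagram (m : ℕ) (M : Set (Euc m)) (A : Type) [Fintype A] :
    FinBallUnionPoset m M ⥤ Type where
  obj U := {u : A → ℝ × Euc m // IsStdEmbBalls U.1 u}
  map {U V} h := TypeCat.ofHom fun u => ⟨u.1, by
    obtain ⟨h1, h2, h3⟩ := u.2
    exact ⟨h1, h2, h3.trans (leOfHom h)⟩⟩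
  map_id := by intros; rfl
  map_comp := by intros; rfl

/-- The canonical cocone on `embDiagram` with apex `sEmb(A × D^m, M)`. -/
def embCocone (m : ℕ) (M : Set (Euc m)) (A : Type) [Fintype A] :
    Cocone (embDiagram m M A) where
  pt := {u : A → ℝ × Euc m // IsStdEmbBalls M u}
  ι :=
    { app := fun U => TypeCat.ofHom fun u => ⟨u.1, by
        obtain ⟨h1, h2, h3⟩ := u.2
        exact ⟨h1, h2, h3.trans (by
          obtain ⟨ι', _, p, _, _, _, hUM⟩ := U.2
          exact hUM)⟩⟩
      naturality := by intros; rfl }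

open Function

lemma aff_image_unitBall {m : ℕ} (p : ℝ × Euc m) (hc : 0 < p.1) :
    aff p '' unitBall m = Metric.ball p.2 p.1 := by
  have : aff p = (· + p.2) ∘ (p.1 • ·) := rfl
  rw [this, Set.image_comp, Set.image_smul, unitBall, smul_unitBall_of_pos hc]
  simp

section StdEmbBalls

variable {m : ℕ} {A : Type} {u : A → ℝ × Euc m}

lemma realizeBalls_mk_mem_ball (hu : ∀ a, 0 < (u a).1) (a : A) (x : unitBall m) :
    realizeBalls u (a, x) ∈ Metric.ball (u a).2 (u a).1 :=
  aff_image_unitBall (u a) (hu a) ▸ Set.mem_image_of_mem _ x.2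

lemma exists_realizeBalls_eq (hu : ∀ a, 0 < (u a).1) {a : A} {y : Euc m}
    (hy : y ∈ Metric.ball (u a).2 (u a).1) : ∃ x : unitBall m, realizeBalls u (a, x) = y := by
  rw [← aff_image_unitBall (u a) (hu a)] at hy
  obtain ⟨x, hx, rfl⟩ := hy
  exact ⟨⟨x, hx⟩, rfl⟩

lemma range_realizeBalls (hu : ∀ a, 0 < (u a).1) :
    Set.range (realizeBalls u) = ⋃ a, Metric.ball (u a).2 (u a).1 := by
  refine subset_antisymm ?_ fun y hy => ?_
  · rintro _ ⟨⟨a, x⟩, rfl⟩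
    exact Set.mem_iUnion_of_mem a (realizeBalls_mk_mem_ball hu a x)
  · obtain ⟨a, ha⟩ := Set.mem_iUnion.1 hy
    obtain ⟨x, rfl⟩ := exists_realizeBalls_eq hu ha
    exact Set.mem_range_self _

lemma disjoint_ball_of_injective_realizeBalls (hu : ∀ a, 0 < (u a).1)
    (hinj : Injective (realizeBalls u)) {a a' : A} (h : a ≠ a') :
    Disjoint (Metric.ball (u a).2 (u a).1) (Metric.ball (u a').2 (u a').1) := by
  refine Set.disjoint_left.2 fun y hy hy' => h ?_
  obtain ⟨x, rfl⟩ := exists_realizeBalls_eq hu hy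
  obtain ⟨x', hx'⟩ := exists_realizeBalls_eq hu hy'
  exact congrArg Prod.fst (hinj hx').symm

lemma IsStdEmbBalls.isFinBallUnion_range [Finite A] {M : Set (Euc m)}
    (hu : IsStdEmbBalls M u) : IsFinBallUnion M (Set.range (realizeBalls u)) :=
  ⟨A, Fintype.ofFinite A, u, hu.1, fun _ _ => disjoint_ball_of_injective_realizeBalls hu.1 hu.2.1,
    range_realizeBalls hu.1, hu.2.2⟩

lemma IsStdEmbBalls.onto_range {X : Set (Euc m)} (hu : IsStdEmbBalls X u) :
    IsStdEmbBalls (Set.range (realizeBalls u)) u :=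
  ⟨hu.1, hu.2.1, subset_rfl⟩

def IsStdEmbBalls.rangeFinBallUnion [Finite A] {M : Set (Euc m)} (hu : IsStdEmbBalls M u) :
    FinBallUnionPoset m M :=
  ⟨Set.range (realizeBalls u), hu.isFinBallUnion_range⟩

end StdEmbBalls

section Colimit

variable {m : ℕ} {M : Set (Euc m)} {A : Type} [Fintype A]

def colimitOfStdEmb (u : (embCocone m M A).pt) : colimit (embDiagram m M A) :=
  colimit.ι (embDiagram m M A) u.2.rangeFinBallUnion ⟨u.1, u.2.onto_range⟩

lemma colimit_ι_eq_colimitOfStdEmb (U : FinBallUnionPoset m M)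
    (u : (embDiagram m M A).obj U) :
    colimit.ι (embDiagram m M A) U u = colimitOfStdEmb ((embCocone m M A).ι.app U u) :=
  colimit.w_apply (embDiagram m M A)
    (homOfLE (show ((embCocone m M A).ι.app U u).2.rangeFinBallUnion ≤ U from u.2.2.2))
    ⟨u.1, u.2.onto_range⟩

end Colimit

theorem stmt_15_general (m : ℕ) (M : Set (Euc m)) (A : Type) [Fintype A] :
    Function.Bijective (colimit.desc (embDiagram m M A) (embCocone m M A)) := by
  refine bijective_iff_has_inverse.2 ⟨colimitOfStdEmb, fun x => ?_, fun u => ?_⟩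
  · obtain ⟨U, u, rfl⟩ := Types.jointly_surjective' x
    rw [colimit.ι_desc_apply, colimit_ι_eq_colimitOfStdEmb]
  · exact colimit.ι_desc_apply (embCocone m M A) _ _

theorem stmt_15 (m : ℕ) (hm : 1 ≤ m) (M : Set (Euc m)) (hM : IsOpen M)
    (A : Type) [Fintype A] :
    Function.Bijective (colimit.desc (embDiagram m M A) (embCocone m M A)) :=
  stmt_15_general m M A

end
end

section
/- Let k ≥ 1. Every homogeneous element of degree k − 1 of Λ_k is congruent modulo the Arnold ideal I to a ℤ-linear combination of monomials u_{e₁}u_{e₂}⋯u_{e_{k−1}} for which the simple graph on vertex set {1,…,k} with edge set {e₁,…,e_{k−1}} is connected and acyclic (a spanning tree of the complete graph on {1,…,k}); equivalently, the image of the degree-(k−1) homogeneous component of Λ_k in the quotient Λ_k/I is spanned over ℤ by the images of such tree monomials. -/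
/-!
A monomial of degree `k - 1` with a repeated generator vanishes. Otherwise its `k - 1` edges
either form an acyclic graph on `k` vertices, hence a spanning tree, or they contain the edges of
a cycle, and the monomial is, up to sign, a multiple of the cycle monomial. Cycle monomials lie
in the Arnold ideal by induction on the length: `u_{wv} u_{vx} ≡ -u_{vx} u_{xw} - u_{xw} u_{wv}`
replaces two consecutive edges of the cycle by the chord `{x, w}` of a shorter cycle.
-/

noncomputable section

open scoped Sym2

/-- The index type of generators: 2-element subsets {i,j} of {1,…,k}, encoded as
non-diagonal elements of `Sym2 (Fin k)`. -/
def EdgeIdx (k : ℕ) : Type := {p : Sym2 (Fin k) // ¬ p.IsDiag}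

/-- The free ℤ-module on the generators. -/
abbrev GenModule (k : ℕ) := EdgeIdx k →₀ ℤ

/-- Λ_k: the exterior algebra over ℤ on one degree-one generator for each 2-element
subset of {1,…,k}. -/
abbrev Lambda (k : ℕ) := ExteriorAlgebra ℤ (GenModule k)

/-- The generator corresponding to an edge. -/
def gen {k : ℕ} (e : EdgeIdx k) : Lambda k :=
  ExteriorAlgebra.ι ℤ (Finsupp.single e 1)

/-- The generator `u_{ij}` for distinct `i`, `j`. -/
def u {k : ℕ} (i j : Fin k) (h : i ≠ j) : Lambda k :=
  gen ⟨s(i, j), by simpa using h⟩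

/-- The set of Arnold elements `u_{ij}u_{jl} + u_{jl}u_{li} + u_{li}u_{ij}`
for pairwise distinct `i`, `j`, `l`. -/
def arnoldSet (k : ℕ) : Set (Lambda k) :=
  {x | ∃ (i j l : Fin k) (hij : i ≠ j) (hjl : j ≠ l) (hli : l ≠ i),
    x = u i j hij * u j l hjl + u j l hjl * u l i hli + u l i hli * u i j hij}

/-- The Arnold ideal: the two-sided ideal generated by the Arnold elements, realized as
the ℤ-span of all products `a * g * b` with `g` an Arnold element. -/
def arnoldIdeal (k : ℕ) : Submodule ℤ (Lambda k) :=
  Submodule.span ℤ {x | ∃ (a : Lambda k) (g : Lambda k) (b : Lambda k),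
    g ∈ arnoldSet k ∧ x = a * g * b}

/-- The homogeneous degree-`n` component of Λ_k: the `n`-th power of the image of the
generating module. -/
def degComponent (k n : ℕ) : Submodule ℤ (Lambda k) :=
  (LinearMap.range (ExteriorAlgebra.ι ℤ : GenModule k →ₗ[ℤ] Lambda k)) ^ n

/-- The set of tree monomials: products `u_{e₁}⋯u_{e_{k−1}}` over a list of `k−1` edges
such that the simple graph on `{1,…,k}` with these edges is connected and acyclic. -/
def treeMonomials (k : ℕ) : Set (Lambda k) :=
  {x | ∃ l : List (EdgeIdx k), l.length = k - 1 ∧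
    (SimpleGraph.fromEdgeSet {p : Sym2 (Fin k) | ∃ e ∈ l, e.1 = p}).Connected ∧
    (SimpleGraph.fromEdgeSet {p : Sym2 (Fin k) | ∃ e ∈ l, e.1 = p}).IsAcyclic ∧
    x = (l.map gen).prod}

namespace ExteriorAlgebra

variable {R M : Type*} [CommRing R] [AddCommGroup M] [Module R M]

theorem exists_prod_map_ι_eq_units_smul_of_perm {L L' : List M} (h : L.Perm L') :
    ∃ ε : ℤˣ, (L.map (ι R)).prod = (ε : ℤ) • (L'.map (ι R)).prod := by
  induction h with
  | nil => exact ⟨1, by simp⟩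
  | cons x _ ih =>
    obtain ⟨ε, he⟩ := ih
    exact ⟨ε, by simp only [List.map_cons, List.prod_cons, he, mul_smul_comm]⟩
  | swap x y L =>
    refine ⟨-1, ?_⟩
    have hswap : ι R y * ι R x = -(ι R x * ι R y) :=
      eq_neg_of_add_eq_zero_left (ι_add_mul_swap y x)
    simp only [List.map_cons, List.prod_cons, ← mul_assoc, hswap, Units.val_neg, Units.val_one,
      neg_smul, one_smul, neg_mul]
  | trans _ _ ih₁ ih₂ =>
    obtain ⟨ε₁, he₁⟩ := ih₁
    obtain ⟨ε₂, he₂⟩ := ih₂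
    exact ⟨ε₁ * ε₂, by rw [he₁, he₂, smul_smul, Units.val_mul]⟩

theorem exists_prod_map_ι_eq_units_smul_mul_of_subperm {s L : List M} (h : s.Subperm L) :
    ∃ (ε : ℤˣ) (t : List M),
      (L.map (ι R)).prod = (ε : ℤ) • ((s.map (ι R)).prod * (t.map (ι R)).prod) := by
  obtain ⟨s', hs', hsub⟩ := h
  obtain ⟨t, ht⟩ := hsub.exists_perm_append
  obtain ⟨ε, he⟩ :=
    exists_prod_map_ι_eq_units_smul_of_perm (R := R) (ht.trans (hs'.append_right t))
  exact ⟨ε, t, by rw [he, List.map_append, List.prod_append]⟩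

theorem prod_map_ι_eq_zero_of_not_nodup {L : List M} (h : ¬ L.Nodup) :
    (L.map (ι R)).prod = 0 := by
  obtain ⟨x, hx⟩ : ∃ x, [x, x].Sublist L := by simpa [List.nodup_iff_sublist] using h
  obtain ⟨ε, t, he⟩ := exists_prod_map_ι_eq_units_smul_mul_of_subperm (R := R) hx.subperm
  simp [he]

end ExteriorAlgebra

theorem SimpleGraph.IsAcyclic.connected_of_card_edgeSet {V : Type*} [Finite V] [Nonempty V]
    {G : SimpleGraph V} (hG : G.IsAcyclic) (hcard : Nat.card G.edgeSet + 1 = Nat.card V) :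
    G.Connected := by
  obtain ⟨T, hGT, -, hT⟩ := connected_top.exists_isTree_le_of_le_of_isAcyclic le_top hG
  have hTcard := (isTree_iff_connected_and_card.mp hT).2
  have hsub : G.edgeSet ⊆ T.edgeSet := edgeSet_mono hGT
  have : G.edgeSet = T.edgeSet := by
    refine Set.eq_of_subset_of_ncard_le hsub ?_ (Set.toFinite _)
    simp only [← Nat.card_coe_set_eq]
    omega
  exact edgeSet_injective this ▸ hT.connected

section Arnold

open SimpleGraph

variable {k : ℕ}

-- Generators extended to all of `Sym2 (Fin k)`, with diagonal pairs sent to `0`, so that edges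
-- of walks can be used without carrying non-diagonality proofs.
def edgeVec (p : Sym2 (Fin k)) : GenModule k :=
  if h : p.IsDiag then 0 else Finsupp.single ⟨p, h⟩ 1

def edgeGen (p : Sym2 (Fin k)) : Lambda k := ExteriorAlgebra.ι ℤ (edgeVec p)

theorem edgeGen_val (e : EdgeIdx k) : edgeGen e.1 = gen e := by
  rw [edgeGen, edgeVec, dif_neg e.2]
  rfl

theorem edgeGen_mk {i j : Fin k} (h : i ≠ j) : edgeGen s(i, j) = u i j h := by
  simp [edgeGen, edgeVec, h, u, gen]

theorem edgeGen_self (i : Fin k) : edgeGen s(i, i) = 0 := by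
  simp [edgeGen, edgeVec]

theorem edgeGen_mul_comm (p q : Sym2 (Fin k)) :
    edgeGen p * edgeGen q = -(edgeGen q * edgeGen p) :=
  eq_neg_of_add_eq_zero_left (ExteriorAlgebra.ι_add_mul_swap _ _)

theorem edgeGen_mul_self (p : Sym2 (Fin k)) : edgeGen p * edgeGen p = 0 :=
  ExteriorAlgebra.ι_sq_zero _

theorem mul_mem_arnoldIdeal (a : Lambda k) {x : Lambda k} (hx : x ∈ arnoldIdeal k)
    (b : Lambda k) : a * x * b ∈ arnoldIdeal k := by
  induction hx using Submodule.span_induction with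
  | mem y hy =>
    obtain ⟨c, g, d, hg, rfl⟩ := hy
    exact Submodule.subset_span ⟨a * c, g, d * b, hg, by noncomm_ring⟩
  | zero => simp
  | add y z _ _ hy hz => simpa [mul_add, add_mul] using add_mem hy hz
  | smul r y _ hy =>
    rw [mul_smul_comm, smul_mul_assoc]
    exact Submodule.smul_mem _ r hy

theorem mul_mem_arnoldIdeal_left (a : Lambda k) {x : Lambda k} (hx : x ∈ arnoldIdeal k) :
    a * x ∈ arnoldIdeal k := by
  simpa using mul_mem_arnoldIdeal a hx 1

theorem mul_mem_arnoldIdeal_right {x : Lambda k} (hx : x ∈ arnoldIdeal k) (b : Lambda k) :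
    x * b ∈ arnoldIdeal k := by
  simpa using mul_mem_arnoldIdeal 1 hx b

theorem arnold_mem_arnoldIdeal {i j l : Fin k} (hij : i ≠ j) (hjl : j ≠ l) (hli : l ≠ i) :
    edgeGen s(i, j) * edgeGen s(j, l) + edgeGen s(j, l) * edgeGen s(l, i)
      + edgeGen s(l, i) * edgeGen s(i, j) ∈ arnoldIdeal k := by
  refine Submodule.subset_span ⟨1, _, 1, ⟨i, j, l, hij, hjl, hli, rfl⟩, ?_⟩
  rw [edgeGen_mk hij, edgeGen_mk hjl, edgeGen_mk hli, one_mul, mul_one]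

theorem SimpleGraph.Walk.IsPath.edgeGen_mul_prod_mem_arnoldIdeal {G : SimpleGraph (Fin k)}
    {v w : Fin k} {p : G.Walk v w} (hp : p.IsPath) :
    edgeGen s(w, v) * (p.edges.map edgeGen).prod ∈ arnoldIdeal k := by
  induction p with
  | nil => simp [edgeGen_self]
  | @cons v x w hvx q ih =>
    rw [Walk.cons_isPath_iff] at hp
    simp only [Walk.edges_cons, List.map_cons, List.prod_cons]
    set M := (q.edges.map edgeGen).prod
    by_cases hxw : x = w
    · subst hxw
      rw [← mul_assoc, Sym2.eq_swap, edgeGen_mul_self, zero_mul]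
      exact zero_mem _
    have hwv : w ≠ v := fun h => hp.2 (h ▸ q.end_mem_support)
    have hM : edgeGen s(x, w) * M ∈ arnoldIdeal k := Sym2.eq_swap ▸ ih hp.1
    have key : edgeGen s(w, v) * (edgeGen s(v, x) * M)
        = (edgeGen s(w, v) * edgeGen s(v, x) + edgeGen s(v, x) * edgeGen s(x, w)
            + edgeGen s(x, w) * edgeGen s(w, v)) * M
          - edgeGen s(v, x) * (edgeGen s(x, w) * M) + edgeGen s(w, v) * (edgeGen s(x, w) * M) := by
      rw [edgeGen_mul_comm s(x, w)]
      noncomm_ring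
    rw [key]
    exact add_mem (sub_mem (mul_mem_arnoldIdeal_right (arnold_mem_arnoldIdeal hwv hvx.ne hxw) M)
      (mul_mem_arnoldIdeal_left _ hM)) (mul_mem_arnoldIdeal_left _ hM)

theorem SimpleGraph.Walk.IsCycle.prod_edgeGen_mem_arnoldIdeal {G : SimpleGraph (Fin k)}
    {v : Fin k} {c : G.Walk v v} (hc : c.IsCycle) :
    (c.edges.map edgeGen).prod ∈ arnoldIdeal k := by
  cases c with
  | nil => exact absurd hc Walk.not_isCycle_nil
  | cons h p =>
    rw [Walk.cons_isCycle_iff] at hc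
    simpa using hc.1.edgeGen_mul_prod_mem_arnoldIdeal

theorem map_edgeGen (L : List (Sym2 (Fin k))) :
    L.map edgeGen = (L.map edgeVec).map (ExteriorAlgebra.ι ℤ) := by
  rw [List.map_map]
  rfl

theorem prod_edgeGen_mem_arnoldIdeal_of_not_isAcyclic {G : SimpleGraph (Fin k)}
    (hG : ¬ G.IsAcyclic) {L : List (Sym2 (Fin k))} (hL : G.edgeSet ⊆ {q | q ∈ L}) :
    (L.map edgeGen).prod ∈ arnoldIdeal k := by
  obtain ⟨v, c, hc⟩ : ∃ v, ∃ c : G.Walk v v, c.IsCycle := by simpa [IsAcyclic] using hG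
  obtain ⟨s, hs, hsL⟩ : c.edges.Subperm L :=
    hc.edges_nodup.subperm fun e he => hL (c.edges_subset_edgeSet he)
  obtain ⟨ε, t, he⟩ := ExteriorAlgebra.exists_prod_map_ι_eq_units_smul_mul_of_subperm
    (R := ℤ) ⟨_, hs.map edgeVec, hsL.map edgeVec⟩
  rw [map_edgeGen, he, ← map_edgeGen]
  exact Submodule.smul_mem _ _ (mul_mem_arnoldIdeal_right hc.prod_edgeGen_mem_arnoldIdeal _)

theorem prod_gen_mem_span_treeMonomials_sup_arnoldIdeal (hk : 1 ≤ k) {l : List (EdgeIdx k)}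
    (hl : l.length = k - 1) :
    (l.map gen).prod ∈ Submodule.span ℤ (treeMonomials k) ⊔ arnoldIdeal k := by
  set G := fromEdgeSet {p : Sym2 (Fin k) | ∃ e ∈ l, e.1 = p}
  by_cases htree : G.Connected ∧ G.IsAcyclic
  · exact Submodule.mem_sup_left (Submodule.subset_span ⟨l, hl, htree.1, htree.2, rfl⟩)
  refine Submodule.mem_sup_right ?_
  have hmap : l.map gen = (l.map (·.1)).map edgeGen := by
    rw [List.map_map]
    exact List.map_congr_left fun e _ => (edgeGen_val e).symm
  have hG : G.edgeSet = {q | q ∈ l.map (·.1)} := by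
    ext q
    rw [edgeSet_fromEdgeSet]
    refine ⟨fun h => List.mem_map.mpr h.1, fun h => ⟨List.mem_map.mp h, ?_⟩⟩
    obtain ⟨e, -, rfl⟩ := List.mem_map.mp h
    exact e.2
  rw [hmap]
  by_cases hnd : (l.map (·.1)).Nodup
  swap
  · rw [map_edgeGen, ExteriorAlgebra.prod_map_ι_eq_zero_of_not_nodup fun h => hnd (h.of_map _)]
    exact zero_mem _
  have : Nonempty (Fin k) := ⟨⟨0, hk⟩⟩
  refine prod_edgeGen_mem_arnoldIdeal_of_not_isAcyclic
    (fun hac => htree ⟨hac.connected_of_card_edgeSet ?_, hac⟩) hG.subset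
  have hlen : (l.map (·.1)).length = k - 1 := (List.length_map _).trans hl
  rw [hG, Nat.card_coe_set_eq, ← List.coe_toFinset, Set.ncard_coe_finset,
    List.toFinset_card_of_nodup hnd, hlen, Nat.card_fin]
  omega

theorem range_ι_eq_span_range_gen :
    LinearMap.range (ExteriorAlgebra.ι ℤ : GenModule k →ₗ[ℤ] Lambda k)
      = Submodule.span ℤ (Set.range (gen (k := k))) := by
  rw [LinearMap.range_eq_map, ← Finsupp.basisSingleOne.span_eq, Submodule.map_span,
    ← Set.range_comp]
  rfl

theorem degComponent_le_span_prod_gen (n : ℕ) :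
    degComponent k n ≤
      Submodule.span ℤ {x | ∃ l : List (EdgeIdx k), l.length = n ∧ x = (l.map gen).prod} := by
  rw [degComponent, range_ι_eq_span_range_gen, Submodule.span_pow]
  refine Submodule.span_mono fun x hx => ?_
  obtain ⟨f, rfl⟩ := Set.mem_pow.mp hx
  choose e he using fun i => (f i).2
  refine ⟨List.ofFn e, List.length_ofFn, ?_⟩
  simp [List.map_ofFn, Function.comp_def, he]

end Arnold

theorem stmt_17 (k : ℕ) (hk : 1 ≤ k) :
    ∀ x ∈ degComponent k (k - 1),
      ∃ y ∈ Submodule.span ℤ (treeMonomials k), x - y ∈ arnoldIdeal k := by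
  intro x hx
  have hle : degComponent k (k - 1) ≤ Submodule.span ℤ (treeMonomials k) ⊔ arnoldIdeal k :=
    (degComponent_le_span_prod_gen _).trans <| Submodule.span_le.mpr fun _ ⟨_, hl, hm⟩ =>
      hm ▸ prod_gen_mem_span_treeMonomials_sup_arnoldIdeal hk hl
  obtain ⟨y, hy, z, hz, rfl⟩ := Submodule.mem_sup.mp (hle hx)
  exact ⟨y, hy, by simpa using hz⟩

end
end
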